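/- Let J : ℝ → ℝ be a convex, twice continuously differentiable function with J(0) = 0, and define the Legendre–Fenchel transform I(x) = sup_{s ∈ ℝ} (s·x − J(s)). Set x₀ = J'(0) and suppose J''(0) > 0. Then there is an open interval around x₀ on which I is twice differentiable, I(x₀) = 0, I'(x₀) = 0, and I''(x₀) = 1 / J''(0); consequently I(x) = (x − x₀)² / (2·J''(0)) + o((x − x₀)²) as x → x₀. -/

import Mathlib

open Set Filter Topology

/-!
Since `J''(0) ≠ 0`, the inverse function theorem gives a differentiable local inverse `σ` of `J'`
near `x₀ = J'(0)`, with `σ x₀ = 0`. For a convex `J` the supremum defining `I x` is attained at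
the critical point `s = σ x`, so `I x = σ x * x - J (σ x)` near `x₀`; the envelope theorem then
gives `I' = σ`, hence `I'' = 1 / J'' ∘ σ`. The second-order expansion follows by L'Hôpital's rule.
-/

theorem ConvexOn.iSup_mul_sub_eq {J : ℝ → ℝ} (hJ : ConvexOn ℝ univ J) {t x : ℝ}
    (ht : HasDerivAt J x t) : ⨆ s, (s * x - J s) = t * x - J t := by
  have hconv : ConvexOn ℝ univ (fun s => J s - s * x) :=
    hJ.sub (((LinearMap.mul ℝ ℝ).flip x).concaveOn convex_univ)
  have hmin : IsMinOn (fun s => J s - s * x) univ t := by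
    refine hconv.isMinOn_of_rightDeriv_eq_zero (by simp) ?_
    have hd : HasDerivAt (fun s => J s - s * x) 0 t := by
      simpa using ht.fun_sub ((hasDerivAt_id' t).mul_const x)
    exact hd.hasDerivWithinAt.derivWithin (uniqueDiffWithinAt_Ioi t)
  have hle : ∀ s, s * x - J s ≤ t * x - J t := fun s => by
    linarith [show J t - t * x ≤ J s - s * x from hmin (mem_univ s)]
  exact le_antisymm (ciSup_le hle) (le_ciSup ⟨_, forall_mem_range.2 hle⟩ t)

theorem HasDerivAt.mul_id_sub_comp {𝕜 : Type*} [NontriviallyNormedField 𝕜] {J σ : 𝕜 → 𝕜}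
    {x σ' : 𝕜} (hσ : HasDerivAt σ σ' x) (hJ : HasDerivAt J x (σ x)) :
    HasDerivAt (fun y => σ y * y - J (σ y)) (σ x) x :=
  ((hσ.fun_mul (hasDerivAt_id' x)).fun_sub (hJ.comp x hσ)).congr_deriv (by ring)

theorem ConvexOn.hasDerivAt_iSup_mul_sub {J σ : ℝ → ℝ} (hJ : ConvexOn ℝ univ J)
    (hJd : Differentiable ℝ J) {U : Set ℝ} (hU : IsOpen U) (hσJ : ∀ y ∈ U, deriv J (σ y) = y)
    {x : ℝ} (hx : x ∈ U) (hσ : DifferentiableAt ℝ σ x) :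
    HasDerivAt (fun y => ⨆ s, (s * y - J s)) (σ x) x := by
  have hJσ : ∀ y ∈ U, HasDerivAt J y (σ y) := fun y hy =>
    (hJd (σ y)).hasDerivAt.congr_deriv (hσJ y hy)
  refine (hσ.hasDerivAt.mul_id_sub_comp (hJσ x hx)).congr_of_eventuallyEq ?_
  filter_upwards [hU.mem_nhds hx] with y hy using hJ.iSup_mul_sub_eq (hJσ y hy)

theorem exists_isOpen_hasDerivAt_rightInverse {𝕜 : Type*} [RCLike 𝕜] {f : 𝕜 → 𝕜} {a : 𝕜}
    (hf : ContDiff 𝕜 1 f) (ha : deriv f a ≠ 0) :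
    ∃ σ : 𝕜 → 𝕜, ∃ U : Set 𝕜, IsOpen U ∧ f a ∈ U ∧ σ (f a) = a ∧
      ∀ x ∈ U, f (σ x) = x ∧ HasDerivAt σ (deriv f (σ x))⁻¹ x := by
  have hfa : HasStrictDerivAt f (deriv f a) a := hf.contDiffAt.hasStrictDerivAt one_ne_zero
  set e := (hfa.hasStrictFDerivAt_equiv ha).toOpenPartialHomeomorph f
  have he : ⇑e = f := rfl
  have ha_mem : a ∈ e.source := HasStrictFDerivAt.mem_toOpenPartialHomeomorph_source _
  refine ⟨e.symm, e.target ∩ e.symm ⁻¹' {s | deriv f s ≠ 0},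
    e.continuousOn_symm.isOpen_inter_preimage e.open_target
      (isOpen_ne_fun (hf.continuous_deriv le_rfl) continuous_const),
    ⟨e.map_source ha_mem, ?_⟩, e.left_inv ha_mem, fun x hx => ⟨e.right_inv hx.1, ?_⟩⟩
  · simpa [← he, e.left_inv ha_mem] using ha
  · refine e.hasDerivAt_symm hx.1 hx.2 ?_
    exact ((hf.differentiable one_ne_zero) _).hasDerivAt

theorem tendsto_sub_mul_sq_div_sq {F φ : ℝ → ℝ} {x₀ c : ℝ}
    (hF : ∀ᶠ y in 𝓝 x₀, HasDerivAt F (φ y) y) (hF₀ : F x₀ = 0)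
    (hφ : HasDerivAt φ c x₀) (hφ₀ : φ x₀ = 0) :
    Tendsto (fun x => (F x - c * (x - x₀) ^ 2 / 2) / (x - x₀) ^ 2) (𝓝[≠] x₀) (𝓝 0) := by
  have hden : ∀ y, HasDerivAt (fun x => (x - x₀) ^ 2) (2 * (y - x₀)) y := fun y => by
    simpa using ((hasDerivAt_id' y).sub_const x₀).fun_pow 2
  have hnum : ∀ᶠ y in 𝓝 x₀,
      HasDerivAt (fun x => F x - c * (x - x₀) ^ 2 / 2) (φ y - c * (y - x₀)) y := by
    filter_upwards [hF] with y hy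
    exact (hy.fun_sub (((hden y).const_mul c).div_const 2)).congr_deriv (by ring)
  have hcont : ∀ {G : ℝ → ℝ}, ContinuousAt G x₀ → G x₀ = 0 → Tendsto G (𝓝[≠] x₀) (𝓝 0) :=
    fun hG hG₀ => hG₀ ▸ hG.tendsto.mono_left nhdsWithin_le_nhds
  refine HasDerivAt.lhopital_zero_nhdsNE (nhdsWithin_le_nhds hnum) (.of_forall hden) ?_
    (hcont hnum.self_of_nhds.continuousAt (by simp [hF₀]))
    (hcont (hden x₀).continuousAt (by simp)) ?_
  · filter_upwards [self_mem_nhdsWithin] with y hy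
    exact mul_ne_zero two_ne_zero (sub_ne_zero.2 hy)
  · have hslope := (hasDerivAt_iff_tendsto_slope.1 hφ).sub_const c |>.div_const 2
    rw [sub_self, zero_div] at hslope
    refine hslope.congr' ?_
    filter_upwards [self_mem_nhdsWithin] with y hy
    rw [slope_def_field, hφ₀]
    field_simp [sub_ne_zero.2 hy]
    ring

/-- Quadratic behavior of the Legendre–Fenchel transform of a convex C²
generating function `J` near `x₀ = J'(0)`, with `I''(x₀) = 1 / J''(0)`. -/
theorem stmt_0
    (J : ℝ → ℝ) (hconv : ConvexOn ℝ Set.univ J) (hJC2 : ContDiff ℝ 2 J)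
    (hJ0 : J 0 = 0)
    (I : ℝ → ℝ) (hI : ∀ x : ℝ, I x = ⨆ s : ℝ, (s * x - J s))
    (x₀ : ℝ) (hx₀ : x₀ = deriv J 0)
    (hpos : 0 < deriv (deriv J) 0) :
    ∃ U : Set ℝ, IsOpen U ∧ x₀ ∈ U ∧
      (∀ x ∈ U, DifferentiableAt ℝ I x ∧ DifferentiableAt ℝ (deriv I) x) ∧
      I x₀ = 0 ∧ deriv I x₀ = 0 ∧
      deriv (deriv I) x₀ = 1 / deriv (deriv J) 0 ∧
      Filter.Tendsto
        (fun x : ℝ => (I x - (x - x₀) ^ 2 / (2 * deriv (deriv J) 0)) / (x - x₀) ^ 2)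
        (nhdsWithin x₀ {x₀}ᶜ) (nhds 0) := by
  have hJd : Differentiable ℝ J := hJC2.differentiable two_ne_zero
  obtain ⟨σ, U, hU, hx₀U, hσ₀, hσ⟩ :=
    exists_isOpen_hasDerivAt_rightInverse (hJC2.deriv' (n := 1)) hpos.ne'
  rw [← hx₀] at hx₀U hσ₀
  have hI' : ∀ x ∈ U, HasDerivAt I (σ x) x := fun x hx =>
    funext hI ▸ hconv.hasDerivAt_iSup_mul_sub hJd hU (fun y hy => (hσ y hy).1) hx
      (hσ x hx).2.differentiableAt
  have hI'' : ∀ x ∈ U, HasDerivAt (deriv I) (deriv (deriv J) (σ x))⁻¹ x := fun x hx =>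
    (hσ x hx).2.congr_of_eventuallyEq <| by
      filter_upwards [hU.mem_nhds hx] with y hy using (hI' y hy).deriv
  have hI₀ : I x₀ = 0 := by
    simp [hI, hconv.iSup_mul_sub_eq ((hJd 0).hasDerivAt.congr_deriv hx₀.symm), hJ0]
  refine ⟨U, hU, hx₀U, fun x hx => ⟨(hI' x hx).differentiableAt, (hI'' x hx).differentiableAt⟩,
    hI₀, by simp [(hI' x₀ hx₀U).deriv, hσ₀], by simp [(hI'' x₀ hx₀U).deriv, hσ₀], ?_⟩
  have := tendsto_sub_mul_sq_div_sq (eventually_of_mem (hU.mem_nhds hx₀U) hI') hI₀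
    (hσ x₀ hx₀U).2 hσ₀
  rw [hσ₀] at this
  exact this.congr fun x => by ring
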